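/- (Mrs. Gerber's lemma.) Let 0 ≤ ε ≤ 1/2 and let f : {0,1}^n → ℝ be a nonnegative function with E_x f > 0. Then Ent(T_ε f) ≤ n·(E_x f)·φ(Ent(f)/(n·E_x f), ε). -/

import Mathlib

open Finset

/-- The boolean cube `{0,1}^n`. -/
abbrev Cube (n : ℕ) := Fin n → Bool

/-- Expectation over a uniform point of the cube. -/
noncomputable def EX {n : ℕ} (f : Cube n → ℝ) : ℝ :=
  (∑ x : Cube n, f x) / (2 ^ n : ℝ)

/-- The entropy functional `Ent(f) = E f log₂ f - (E f) log₂ (E f)`. -/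
noncomputable def Ent {n : ℕ} (f : Cube n → ℝ) : ℝ :=
  EX (fun x => f x * Real.logb 2 (f x)) - EX f * Real.logb 2 (EX f)

/-- The noise operator `T_ε`. -/
noncomputable def noiseOp {n : ℕ} (ε : ℝ) (f : Cube n → ℝ) : Cube n → ℝ :=
  fun x => ∑ y : Cube n, ε ^ (hammingDist y x) * (1 - ε) ^ (n - hammingDist y x) * f y

/-- Binary entropy function (base 2). -/
noncomputable def H2 (x : ℝ) : ℝ :=
  -(x * Real.logb 2 x) - (1 - x) * Real.logb 2 (1 - x)

/-- The inverse of the binary entropy function, `H₂⁻¹ : [0,1] → [0,1/2]`. -/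
noncomputable def H2inv (y : ℝ) : ℝ :=
  Function.invFunOn H2 (Set.Icc 0 (1 / 2)) y

/-- Mrs. Gerber's function `φ(x, ε)`. -/
noncomputable def phi (x ε : ℝ) : ℝ :=
  1 - H2 ((1 - 2 * ε) * H2inv (1 - x) + ε)

/-- Conditional expectation of `f` given the coordinates in `A`,
viewed as a function on the cube depending only on coordinates in `A`. -/
noncomputable def condE {n : ℕ} (f : Cube n → ℝ) (A : Finset (Fin n)) : Cube n → ℝ :=
  fun x => (∑ z : Cube n, f (fun i => if i ∈ A then x i else z i)) / (2 ^ n : ℝ)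

/-- `Ent(f | A) = Ent(E(f | A))`. -/
noncomputable def EntC {n : ℕ} (f : Cube n → ℝ) (A : Finset (Fin n)) : ℝ :=
  Ent (condE f A)

/-- Expectation over a random subset `T ⊆ [n]` obtained by including each element
independently with probability `l`. -/
noncomputable def ETsub {n : ℕ} (l : ℝ) (g : Finset (Fin n) → ℝ) : ℝ :=
  ∑ T : Finset (Fin n), l ^ T.card * (1 - l) ^ (n - T.card) * g T


/-- Marginal of a distribution `p` on the cube on the coordinates in `T`
(as a function on the cube, depending only on the coordinates in `T`). -/
noncomputable def marg {n : ℕ} (p : Cube n → ℝ) (T : Finset (Fin n)) (x : Cube n) : ℝ :=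
  ∑ y : Cube n, if ∀ i ∈ T, y i = x i then p y else 0

/-- Shannon entropy (base 2) of the marginal of `p` on the coordinates in `T`:
the sum goes over canonical representatives (coordinates outside `T` set to `false`). -/
noncomputable def margEnt {n : ℕ} (p : Cube n → ℝ) (T : Finset (Fin n)) : ℝ :=
  -∑ x : Cube n,
      if ∀ i ∉ T, x i = false then marg p T x * Real.logb 2 (marg p T x) else 0

/-- Shannon entropy (base 2) of a probability distribution on the cube. -/
noncomputable def shEnt {n : ℕ} (p : Cube n → ℝ) : ℝ :=
  -∑ y : Cube n, p y * Real.logb 2 (p y)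

/-- Walsh function `W_S(x) = (-1)^{∑_{i ∈ S} x_i}`. -/
def walsh {n : ℕ} (S : Finset (Fin n)) (x : Cube n) : ℝ :=
  ∏ i ∈ S, (if x i then (-1 : ℝ) else 1)

/-- Walsh–Fourier coefficient `f̂(S) = E_x f(x) W_S(x)`. -/
noncomputable def fourierCoef {n : ℕ} (f : Cube n → ℝ) (S : Finset (Fin n)) : ℝ :=
  EX (fun x => f x * walsh S x)

/-- The noise operator `T_{ε,R}` acting only in the directions in `R`
(the composition of the directional noise operators `T_{ε,i}`, `i ∈ R`). -/
noncomputable def noiseOpOn {n : ℕ} (ε : ℝ) (R : Finset (Fin n)) (g : Cube n → ℝ) :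
    Cube n → ℝ :=
  fun x => ∑ y : Cube n,
    (if ∀ i ∉ R, y i = x i then ∏ i ∈ R, (if y i = x i then 1 - ε else ε) else 0) * g y

/-- `I_g(A,m) = Ent(g | A ∪ {m}) - Ent(g | A) - Ent(g | {m})`. -/
noncomputable def Ifun {n : ℕ} (g : Cube n → ℝ) (A : Finset (Fin n)) (m : Fin n) : ℝ :=
  EntC g (insert m A) - EntC g A - EntC g {m}

/-- `Z_{S;i,j}(f) = Ent(f|S∪{i,j}) - Ent(f|S∪{i}) - Ent(f|S∪{j}) + Ent(f|S)`. -/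
noncomputable def Zfun {n : ℕ} (f : Cube n → ℝ) (S : Finset (Fin n)) (i j : Fin n) : ℝ :=
  EntC f (insert i (insert j S)) - EntC f (insert i S) - EntC f (insert j S) + EntC f S

/-- `Y(A,m,s)`: the average of `Z_{S;i,m}(f)` over subsets `S ⊆ A` with `|S| = s - 1`
and over `i ∈ A \ S`. -/
noncomputable def Yavg {n : ℕ} (f : Cube n → ℝ) (A : Finset (Fin n)) (m : Fin n) (s : ℕ) : ℝ :=
  (∑ S ∈ A.powerset.filter (fun S => S.card = s - 1), ∑ i ∈ A \ S, Zfun f S i m) /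
    (∑ S ∈ A.powerset.filter (fun S => S.card = s - 1), ((A \ S).card : ℝ))

/-- `Λ(k,s,λ) = 1 - ∑_{j=0}^{s-1} C(k,j) λ^j (1-λ)^{k-j}`. -/
noncomputable def Lam (k s : ℕ) (l : ℝ) : ℝ :=
  1 - ∑ j ∈ Finset.range s, (Nat.choose k j : ℝ) * l ^ j * (1 - l) ^ (k - j)

/-- `t_s`: the average of `Z_{S;i,j}(f)` over subsets `S ⊆ [n]` with `|S| = s - 1`
and over distinct `i, j ∉ S`. -/
noncomputable def tAvg {n : ℕ} (f : Cube n → ℝ) (s : ℕ) : ℝ :=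
  (∑ S ∈ (Finset.univ : Finset (Finset (Fin n))).filter (fun S => S.card = s - 1),
      ∑ i ∈ Sᶜ, ∑ j ∈ Sᶜ \ {i}, Zfun f S i j) /
    (∑ S ∈ (Finset.univ : Finset (Finset (Fin n))).filter (fun S => S.card = s - 1),
      ∑ i ∈ Sᶜ, ((Sᶜ \ {i}).card : ℝ))

/-- The entropy functional on an arbitrary finite set with uniform measure. -/
noncomputable def entFin {α : Type*} [Fintype α] (g : α → ℝ) : ℝ :=
  (∑ a, g a * Real.logb 2 (g a)) / (Fintype.card α : ℝ) -
    ((∑ a, g a) / (Fintype.card α : ℝ)) * Real.logb 2 ((∑ a, g a) / (Fintype.card α : ℝ))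

/-!
Normalising `f` to a probability vector `p`, one has `Ent f = E f · (n - H(p))` and
`Ent (T_ε f) = E f · (n - H(T_ε p))`, so the claim is the entropy form `n · G(H(p)/n) ≤ H(T_ε p)`
of Mrs. Gerber's lemma, with `G(h) = H₂(ε ⋆ H₂⁻¹(h))` and `ε ⋆ a = (1 - 2ε) a + ε`.

The analytic heart is the convexity of `G` on `[0, 1]`: at `a = H₂⁻¹(h)` its derivative is
`(1 - 2ε) ℓ(ε ⋆ a) / ℓ(a)` with `ℓ(t) = log ((1 - t) / t)`, and this ratio increases in `a` because
`t (1 - t) ℓ(t)` is concave on `[0, 1/2]` and vanishes at `1/2`.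

The inequality is proved by induction on `n`, splitting off the first coordinate. By the chain
rule, `H(p)` is the entropy `H(w)` of the law `w` of the remaining coordinates plus the conditional
entropy `Σ_y w_y H₂(q_y)` of the first bit, `q_y` being its conditional law given `y`; likewise
for `T_ε p`, whose remaining coordinates have law `T_ε w`. After the noise the first bit has
conditional law `ε ⋆ q_y` given `y`, averaged over the noisy `y`; Jensen for the concave `H₂`
bounds its conditional entropy below by `Σ_y w_y H₂(ε ⋆ q_y) = Σ_y w_y G(H₂(q_y))`, and Jensen
for the convex `G` bounds this below by `G(Σ_y w_y H₂(q_y))`. With the induction hypothesis for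
`w`, a last use of the convexity of `G` gives the claim.
-/

open Real Set

lemma ConcaveOn.sum_mul_le_sum_mul_map_div {ι : Type*} {s : Finset ι} {g : ℝ → ℝ} {D : Set ℝ}
    (hg : ConcaveOn ℝ D g) {c x : ι → ℝ} (hc : ∀ i ∈ s, 0 ≤ c i) (hx : ∀ i ∈ s, x i ∈ D) :
    ∑ i ∈ s, c i * g (x i) ≤ (∑ i ∈ s, c i) * g ((∑ i ∈ s, c i * x i) / ∑ i ∈ s, c i) := by
  rcases (Finset.sum_nonneg hc).eq_or_lt with h | h
  · have hz := (Finset.sum_eq_zero_iff_of_nonneg hc).1 h.symm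
    rw [← h, zero_mul]
    exact (Finset.sum_eq_zero fun i hi => by rw [hz i hi, zero_mul]).le
  · have hJ := hg.le_map_centerMass hc h hx
    simp only [Finset.centerMass, smul_eq_mul, Function.comp_apply] at hJ
    calc ∑ i ∈ s, c i * g (x i) = (∑ i ∈ s, c i) * ((∑ i ∈ s, c i)⁻¹ * ∑ i ∈ s, c i * g (x i)) := by
          field_simp
      _ ≤ _ := by
          rw [div_eq_inv_mul]
          exact mul_le_mul_of_nonneg_left hJ h.le

lemma ConvexOn.natCast_add_one_mul_map_div_le {g : ℝ → ℝ} (hg : ConvexOn ℝ (Icc 0 1) g) {n : ℕ}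
    {a b : ℝ} (ha : a ∈ Icc (0 : ℝ) 1) (hb : b ∈ Icc (0 : ℝ) n) :
    ((n : ℝ) + 1) * g ((a + b) / (n + 1)) ≤ g a + n * g (b / n) := by
  rcases n.eq_zero_or_pos with rfl | hn
  · obtain rfl : b = 0 := le_antisymm (by simpa using hb.2) hb.1
    simp
  · have hn' : (0 : ℝ) < n := by exact_mod_cast hn
    have h := hg.2 ha ⟨div_nonneg hb.1 hn'.le, (div_le_one hn').2 hb.2⟩
      (by positivity : (0 : ℝ) ≤ 1 / (n + 1)) (by positivity : (0 : ℝ) ≤ n / (n + 1))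
      (by field_simp; ring)
    have harg : 1 / ((n : ℝ) + 1) * a + n / (n + 1) * (b / n) = (a + b) / (n + 1) := by
      field_simp
    simp only [smul_eq_mul, harg] at h
    calc ((n : ℝ) + 1) * g ((a + b) / (n + 1))
        ≤ (n + 1) * (1 / (n + 1) * g a + n / (n + 1) * g (b / n)) := by gcongr
      _ = g a + n * g (b / n) := by field_simp

lemma H2_eq_binEntropy_div (x : ℝ) : H2 x = binEntropy x / log 2 := by
  simp only [H2, binEntropy, logb, log_inv]
  ring

lemma H2_zero : H2 0 = 0 := by simp [H2]

lemma H2_half : H2 (1 / 2) = 1 := by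
  rw [H2_eq_binEntropy_div, one_div, binEntropy_two_inv, div_self (log_pos one_lt_two).ne']

lemma H2_one_sub (x : ℝ) : H2 (1 - x) = H2 x := by
  rw [H2_eq_binEntropy_div, H2_eq_binEntropy_div, binEntropy_one_sub]

lemma H2_nonneg {x : ℝ} (hx : x ∈ Icc (0 : ℝ) 1) : 0 ≤ H2 x := by
  rw [H2_eq_binEntropy_div]
  exact div_nonneg (binEntropy_nonneg hx.1 hx.2) (log_nonneg one_le_two)

lemma H2_le_one (x : ℝ) : H2 x ≤ 1 := by
  rw [H2_eq_binEntropy_div]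
  exact (div_le_one (log_pos one_lt_two)).mpr binEntropy_le_log_two

lemma continuous_H2 : Continuous H2 := by
  simp only [funext H2_eq_binEntropy_div]
  exact binEntropy_continuous.div_const _

lemma strictMonoOn_H2 : StrictMonoOn H2 (Icc 0 (1 / 2)) := by
  intro a ha b hb hab
  rw [H2_eq_binEntropy_div, H2_eq_binEntropy_div, one_div] at *
  gcongr
  exact binEntropy_strictMonoOn ha hb hab

lemma concaveOn_H2 : ConcaveOn ℝ (Icc 0 1) H2 := by
  have h := strictConcave_binEntropy.concaveOn.smul (c := (log 2)⁻¹) (by positivity)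
  have hH2 : H2 = fun x => (log 2)⁻¹ • binEntropy x := by
    ext x
    rw [H2_eq_binEntropy_div, smul_eq_mul, div_eq_inv_mul]
  rwa [hH2]

noncomputable def logOdds (t : ℝ) : ℝ := log (1 - t) - log t

lemma hasDerivAt_H2 {p : ℝ} (h0 : p ≠ 0) (h1 : p ≠ 1) :
    HasDerivAt H2 (logOdds p / log 2) p := by
  simp only [funext H2_eq_binEntropy_div]
  exact (hasDerivAt_binEntropy h0 h1).div_const _

lemma surjOn_H2 : SurjOn H2 (Icc 0 (1 / 2)) (Icc 0 1) := by
  have h := intermediate_value_Icc (by norm_num : (0 : ℝ) ≤ 1 / 2) continuous_H2.continuousOn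
  rwa [H2_zero, H2_half] at h

lemma H2_H2inv {y : ℝ} (hy : y ∈ Icc (0 : ℝ) 1) : H2 (H2inv y) = y :=
  Function.invFunOn_eq (surjOn_H2 hy)

lemma H2inv_mem_Icc {y : ℝ} (hy : y ∈ Icc (0 : ℝ) 1) : H2inv y ∈ Icc (0 : ℝ) (1 / 2) :=
  Function.invFunOn_mem (surjOn_H2 hy)

lemma H2inv_H2 {a : ℝ} (ha : a ∈ Icc (0 : ℝ) (1 / 2)) : H2inv (H2 a) = a :=
  strictMonoOn_H2.injOn.leftInvOn_invFunOn ha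

lemma H2inv_mem_Ioo {y : ℝ} (hy : y ∈ Ioo (0 : ℝ) 1) : H2inv y ∈ Ioo (0 : ℝ) (1 / 2) := by
  have hyI := Ioo_subset_Icc_self hy
  obtain ⟨h0, h1⟩ := H2inv_mem_Icc hyI
  refine ⟨h0.lt_of_ne ?_, h1.lt_of_ne ?_⟩ <;> intro h
  · exact hy.1.ne' (by rw [← H2_H2inv hyI, ← h, H2_zero])
  · exact hy.2.ne (by rw [← H2_H2inv hyI, h, H2_half])

lemma monotoneOn_H2inv : MonotoneOn H2inv (Icc 0 1) := by
  intro y₁ h₁ y₂ h₂ h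
  rw [← strictMonoOn_H2.le_iff_le (H2inv_mem_Icc h₁) (H2inv_mem_Icc h₂), H2_H2inv h₁,
    H2_H2inv h₂]
  exact h

lemma continuousOn_H2inv : ContinuousOn H2inv (Icc 0 1) := by
  rw [continuousOn_iff_continuous_domRestrict]
  let g : Icc (0 : ℝ) 1 → Icc (0 : ℝ) (1 / 2) := fun y => ⟨H2inv y, H2inv_mem_Icc y.2⟩
  have hg : Continuous g := Monotone.continuous_of_surjective
    (fun a b h => monotoneOn_H2inv a.2 b.2 h)
    (fun a => ⟨⟨H2 a, H2_nonneg ⟨a.2.1, a.2.2.trans (by norm_num)⟩, H2_le_one a⟩,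
      Subtype.ext (H2inv_H2 a.2)⟩)
  exact continuous_subtype_val.comp hg

lemma logOdds_pos {t : ℝ} (ht : t ∈ Ioo (0 : ℝ) (1 / 2)) : 0 < logOdds t :=
  sub_pos.2 (log_lt_log ht.1 (by linarith [ht.2]))

lemma logOdds_le_logOdds {s t : ℝ} (hs : 0 < s) (ht : t < 1) (hst : s ≤ t) :
    logOdds t ≤ logOdds s := by
  have := log_le_log (by linarith) (by linarith : 1 - t ≤ 1 - s)
  have := log_le_log hs hst
  unfold logOdds
  linarith

lemma hasDerivAt_logOdds {t : ℝ} (h0 : 0 < t) (h1 : t < 1) :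
    HasDerivAt logOdds (-(t * (1 - t))⁻¹) t := by
  have h : HasDerivAt logOdds (-1 / (1 - t) - 1 / t) t :=
    (((hasDerivAt_id t).const_sub 1).log (by simp; linarith)).sub ((hasDerivAt_id t).log h0.ne')
  convert h using 1
  field_simp [(by linarith : (1 : ℝ) - t ≠ 0)]
  ring

/-- Written with `negMulLog` rather than as `t * (1 - t) * logOdds t` (`mulLogOdds_eq`) so that it
is continuous at `0` and `1`. -/
noncomputable def mulLogOdds (t : ℝ) : ℝ := (1 - t) * negMulLog t - t * negMulLog (1 - t)

lemma mulLogOdds_eq (t : ℝ) : mulLogOdds t = t * (1 - t) * logOdds t := by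
  unfold mulLogOdds logOdds negMulLog
  ring

lemma hasDerivAt_mulLogOdds {t : ℝ} (h0 : 0 < t) (h1 : t < 1) :
    HasDerivAt mulLogOdds ((1 - 2 * t) * logOdds t - 1) t := by
  have hsub : HasDerivAt (fun t : ℝ => 1 - t) (-1) t := (hasDerivAt_id t).const_sub 1
  have h := (hsub.mul (hasDerivAt_negMulLog h0.ne')).sub
    ((hasDerivAt_id t).mul ((hasDerivAt_negMulLog (by linarith : 1 - t ≠ 0)).comp t hsub))
  refine h.congr_deriv ?_
  simp only [Function.comp_apply, id, negMulLog, logOdds]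
  ring

lemma concaveOn_mulLogOdds : ConcaveOn ℝ (Icc 0 (1 / 2)) mulLogOdds := by
  refine AntitoneOn.concaveOn_of_deriv (convex_Icc _ _)
    (by unfold mulLogOdds; fun_prop) ?_ ?_
  · rw [interior_Icc]
    exact fun t ht =>
      (hasDerivAt_mulLogOdds ht.1 (by linarith [ht.2])).differentiableAt.differentiableWithinAt
  · rw [interior_Icc]
    intro s hs t ht hst
    rw [(hasDerivAt_mulLogOdds hs.1 (by linarith [hs.2])).deriv,
      (hasDerivAt_mulLogOdds ht.1 (by linarith [ht.2])).deriv]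
    have := logOdds_le_logOdds hs.1 (by linarith [ht.2]) hst
    have := logOdds_pos ht
    have : 0 ≤ 1 - 2 * t := by linarith [ht.2]
    nlinarith

/-- Concavity of `mulLogOdds` between `a` and `1 / 2`, where it vanishes. -/
lemma mul_mulLogOdds_le {ε a : ℝ} (hε0 : 0 ≤ ε) (hε1 : ε ≤ 1 / 2) (ha : a ∈ Icc (0 : ℝ) (1 / 2)) :
    (1 - 2 * ε) * mulLogOdds a ≤ mulLogOdds ((1 - 2 * ε) * a + ε) := by
  have h := concaveOn_mulLogOdds.2 ha (by norm_num : (1 / 2 : ℝ) ∈ Set.Icc 0 (1 / 2))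
    (by linarith : 0 ≤ 1 - 2 * ε) (by linarith : 0 ≤ 2 * ε) (by ring)
  have hhalf : mulLogOdds (1 / 2) = 0 := by norm_num [mulLogOdds]
  simp only [smul_eq_mul, hhalf, mul_zero, add_zero] at h
  rwa [show 2 * ε * (1 / 2) = ε by ring] at h

noncomputable def logOddsRatio (ε a : ℝ) : ℝ := logOdds ((1 - 2 * ε) * a + ε) / logOdds a

lemma hasDerivAt_logOddsRatio {ε a : ℝ} (hε0 : 0 ≤ ε) (hε1 : ε ≤ 1 / 2)
    (ha : a ∈ Ioo (0 : ℝ) (1 / 2)) :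
    HasDerivAt (logOddsRatio ε)
      ((mulLogOdds ((1 - 2 * ε) * a + ε) - (1 - 2 * ε) * mulLogOdds a) /
        (a * (1 - a) * (((1 - 2 * ε) * a + ε) * (1 - ((1 - 2 * ε) * a + ε))) *
          logOdds a ^ 2)) a := by
  have hb0 : 0 < (1 - 2 * ε) * a + ε := by nlinarith [ha.1, ha.2]
  have hb1 : (1 - 2 * ε) * a + ε < 1 := by nlinarith [ha.2]
  have hb : HasDerivAt (fun a : ℝ => (1 - 2 * ε) * a + ε) (1 - 2 * ε) a := by
    simpa using ((hasDerivAt_id a).const_mul (1 - 2 * ε)).add_const ε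
  have h := ((hasDerivAt_logOdds hb0 hb1).comp a hb).div
    (hasDerivAt_logOdds ha.1 (by linarith [ha.2])) (logOdds_pos ha).ne'
  refine h.congr_deriv ?_
  have : 0 < 1 - a := by linarith [ha.2]
  have : 0 < 1 - ((1 - 2 * ε) * a + ε) := by linarith
  have := (logOdds_pos ha).ne'
  have := ha.1.ne'
  simp only [Function.comp_apply, mulLogOdds_eq]
  field_simp
  ring

lemma monotoneOn_logOddsRatio {ε : ℝ} (hε0 : 0 ≤ ε) (hε1 : ε ≤ 1 / 2) :
    MonotoneOn (logOddsRatio ε) (Ioo 0 (1 / 2)) := by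
  refine monotoneOn_of_deriv_nonneg (convex_Ioo _ _) ?_ ?_ ?_
  · exact fun a ha => (hasDerivAt_logOddsRatio hε0 hε1 ha).continuousAt.continuousWithinAt
  · rw [interior_Ioo]
    exact fun a ha => (hasDerivAt_logOddsRatio hε0 hε1 ha).differentiableAt.differentiableWithinAt
  · rw [interior_Ioo]
    intro a ha
    rw [(hasDerivAt_logOddsRatio hε0 hε1 ha).deriv]
    have hb0 : 0 < (1 - 2 * ε) * a + ε := by nlinarith [ha.1, ha.2]
    have := mul_mulLogOdds_le hε0 hε1 (Ioo_subset_Icc_self ha)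
    have : 0 < 1 - a := by linarith [ha.2]
    have : 0 < 1 - ((1 - 2 * ε) * a + ε) := by nlinarith [ha.2]
    have := ha.1
    apply div_nonneg (by linarith)
    positivity

noncomputable def gerber (ε h : ℝ) : ℝ := H2 ((1 - 2 * ε) * H2inv h + ε)

lemma hasDerivAt_H2inv {y : ℝ} (hy : y ∈ Ioo (0 : ℝ) 1) :
    HasDerivAt H2inv (logOdds (H2inv y) / log 2)⁻¹ y := by
  have ha := H2inv_mem_Ioo hy
  refine HasDerivAt.of_local_left_inverse
    (continuousOn_H2inv.continuousAt (Icc_mem_nhds hy.1 hy.2))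
    (hasDerivAt_H2 ha.1.ne' (by linarith [ha.2]))
    (div_pos (logOdds_pos ha) (log_pos one_lt_two)).ne' ?_
  filter_upwards [Ioo_mem_nhds hy.1 hy.2] with z hz
  exact H2_H2inv (Ioo_subset_Icc_self hz)

lemma hasDerivAt_gerber {ε y : ℝ} (hε0 : 0 ≤ ε) (hε1 : ε ≤ 1 / 2) (hy : y ∈ Ioo (0 : ℝ) 1) :
    HasDerivAt (gerber ε) ((1 - 2 * ε) * logOddsRatio ε (H2inv y)) y := by
  have ha := H2inv_mem_Ioo hy
  have hb0 : 0 < (1 - 2 * ε) * H2inv y + ε := by nlinarith [ha.1, ha.2]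
  have hb1 : (1 - 2 * ε) * H2inv y + ε < 1 := by nlinarith [ha.2]
  have h := (hasDerivAt_H2 hb0.ne' hb1.ne).comp y
    (((hasDerivAt_H2inv hy).const_mul (1 - 2 * ε)).add_const ε)
  refine h.congr_deriv ?_
  have := (logOdds_pos ha).ne'
  have := (log_pos one_lt_two).ne'
  unfold logOddsRatio
  field_simp

lemma convexOn_gerber {ε : ℝ} (hε0 : 0 ≤ ε) (hε1 : ε ≤ 1 / 2) :
    ConvexOn ℝ (Icc 0 1) (gerber ε) := by
  refine MonotoneOn.convexOn_of_deriv (convex_Icc 0 1)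
    (continuous_H2.comp_continuousOn ((continuousOn_const.mul continuousOn_H2inv).add
      continuousOn_const)) ?_ ?_ <;> rw [interior_Icc]
  · exact fun y hy => (hasDerivAt_gerber hε0 hε1 hy).differentiableAt.differentiableWithinAt
  · intro y₁ h₁ y₂ h₂ h
    rw [(hasDerivAt_gerber hε0 hε1 h₁).deriv, (hasDerivAt_gerber hε0 hε1 h₂).deriv]
    exact mul_le_mul_of_nonneg_left (monotoneOn_logOddsRatio hε0 hε1 (H2inv_mem_Ioo h₁)
      (H2inv_mem_Ioo h₂) (monotoneOn_H2inv (Ioo_subset_Icc_self h₁) (Ioo_subset_Icc_self h₂) h))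
      (by linarith)

lemma gerber_H2 (ε : ℝ) {q : ℝ} (hq : q ∈ Icc (0 : ℝ) 1) :
    gerber ε (H2 q) = H2 ((1 - 2 * ε) * q + ε) := by
  rcases le_or_gt q (1 / 2) with h | h
  · rw [gerber, H2inv_H2 ⟨hq.1, h⟩]
  · rw [gerber, ← H2_one_sub q, H2inv_H2 ⟨by linarith [hq.2], by linarith⟩,
      ← H2_one_sub ((1 - 2 * ε) * q + ε)]
    ring_nf

def boolMarginal {α : Type*} (R : Bool × α → ℝ) (y : α) : ℝ := R (true, y) + R (false, y)

lemma boolMarginal_nonneg {α : Type*} {P : Bool × α → ℝ} (h0 : ∀ z, 0 ≤ P z) (y : α) :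
    0 ≤ boolMarginal P y :=
  add_nonneg (h0 _) (h0 _)

lemma div_boolMarginal_mem_Icc {α : Type*} {P : Bool × α → ℝ} (h0 : ∀ z, 0 ≤ P z) (y : α) :
    P (true, y) / boolMarginal P y ∈ Icc (0 : ℝ) 1 :=
  ⟨div_nonneg (h0 _) (boolMarginal_nonneg h0 y),
    div_le_one_of_le₀ (le_add_of_nonneg_right (h0 _)) (boolMarginal_nonneg h0 y)⟩

section Entropy

variable {α : Type*} [Fintype α]

noncomputable def entropy (p : α → ℝ) : ℝ := -∑ a, p a * logb 2 (p a)

lemma mul_logb_two_eq_neg_negMulLog_div (x : ℝ) : x * logb 2 x = -negMulLog x / log 2 := by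
  simp only [negMulLog, logb]
  ring

lemma entropy_eq_sum_negMulLog_div (p : α → ℝ) : entropy p = (∑ a, negMulLog (p a)) / log 2 := by
  simp only [entropy, mul_logb_two_eq_neg_negMulLog_div, neg_div, Finset.sum_neg_distrib,
    neg_neg, Finset.sum_div]

lemma H2_eq_negMulLog_add_div (x : ℝ) : H2 x = (negMulLog x + negMulLog (1 - x)) / log 2 := by
  simp only [H2, mul_logb_two_eq_neg_negMulLog_div]
  ring

lemma entropy_comp_equiv {β : Type*} [Fintype β] (e : β ≃ α) (p : α → ℝ) :
    entropy (p ∘ e) = entropy p := by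
  simp only [entropy, Function.comp_apply, Equiv.sum_comp e (fun a => p a * logb 2 (p a))]

lemma entropy_nonneg {p : α → ℝ} (h0 : ∀ a, 0 ≤ p a) (h1 : ∑ a, p a = 1) : 0 ≤ entropy p := by
  rw [entropy_eq_sum_negMulLog_div]
  refine div_nonneg (Finset.sum_nonneg fun a _ => negMulLog_nonneg (h0 a) ?_)
    (log_nonneg one_le_two)
  exact h1 ▸ Finset.single_le_sum (fun b _ => h0 b) (Finset.mem_univ a)

lemma entropy_le_logb_card {p : α → ℝ} (h0 : ∀ a, 0 ≤ p a) (h1 : ∑ a, p a = 1) :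
    entropy p ≤ logb 2 (Fintype.card α) := by
  have hN : (0 : ℝ) < Fintype.card α := by
    rcases isEmpty_or_nonempty α with _ | _
    · simp at h1
    · exact_mod_cast Fintype.card_pos
  have hJ := concaveOn_negMulLog.le_map_sum (t := Finset.univ)
    (w := fun _ => (Fintype.card α : ℝ)⁻¹) (p := p) (fun _ _ => by positivity)
    (by simp [hN.ne']) (fun a _ => h0 a)
  simp only [smul_eq_mul, ← Finset.mul_sum, h1, mul_one] at hJ
  have hval : negMulLog (Fintype.card α : ℝ)⁻¹ = (Fintype.card α : ℝ)⁻¹ * log (Fintype.card α) := by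
    simp [negMulLog, log_inv]
  rw [entropy_eq_sum_negMulLog_div, logb]
  gcongr
  exact le_of_mul_le_mul_left (hJ.trans_eq hval) (by positivity)

lemma sum_boolMarginal (P : Bool × α → ℝ) : ∑ y, boolMarginal P y = ∑ z, P z := by
  simp only [boolMarginal, Fintype.sum_prod_type, Fintype.sum_bool, Finset.sum_add_distrib]

noncomputable def condEntropyFst (R : Bool × α → ℝ) : ℝ :=
  ∑ y, boolMarginal R y * H2 (R (true, y) / boolMarginal R y)

lemma negMulLog_add_negMulLog {A B : ℝ} (hA : 0 ≤ A) (hB : 0 ≤ B) :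
    negMulLog A + negMulLog B = negMulLog (A + B) + (A + B) * log 2 * H2 (A / (A + B)) := by
  rcases (add_nonneg hA hB).eq_or_lt with h | h
  · obtain ⟨rfl, rfl⟩ := (add_eq_zero_iff_of_nonneg hA hB).1 h.symm
    simp
  · set s := A + B
    set q := A / s with hq
    have hA' : A = s * q := by rw [hq]; field_simp
    have hB' : B = s * (1 - q) := by rw [hq]; field_simp; ring
    rw [H2_eq_negMulLog_add_div, mul_assoc, mul_div_cancel₀ _ (log_pos one_lt_two).ne', hA', hB',
      negMulLog_mul, negMulLog_mul]
    ring

lemma entropy_eq_entropy_boolMarginal_add {R : Bool × α → ℝ} (h0 : ∀ z, 0 ≤ R z) :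
    entropy R = entropy (boolMarginal R) + condEntropyFst R := by
  simp only [entropy_eq_sum_negMulLog_div, condEntropyFst, boolMarginal, Fintype.sum_prod_type,
    Fintype.sum_bool, ← Finset.sum_add_distrib, negMulLog_add_negMulLog (h0 _) (h0 _)]
  rw [Finset.sum_add_distrib, add_div]
  congr 1
  rw [Finset.sum_div]
  refine Finset.sum_congr rfl fun y _ => ?_
  field_simp [(log_pos one_lt_two).ne']

lemma condEntropyFst_mem_Icc {R : Bool × α → ℝ} (h0 : ∀ z, 0 ≤ R z) (h1 : ∑ z, R z = 1) :
    condEntropyFst R ∈ Icc (0 : ℝ) 1 := by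
  have hw := boolMarginal_nonneg h0
  refine ⟨Finset.sum_nonneg fun y _ =>
    mul_nonneg (hw y) (H2_nonneg (div_boolMarginal_mem_Icc h0 y)), ?_⟩
  calc condEntropyFst R ≤ ∑ y, boolMarginal R y * 1 :=
        Finset.sum_le_sum fun y _ => mul_le_mul_of_nonneg_left (H2_le_one _) (hw y)
    _ = 1 := by simp only [mul_one, sum_boolMarginal, h1]

end Entropy

section Channel

open Matrix
open scoped Kronecker

variable {α : Type*} [Fintype α]

lemma kronecker_mem_colStochastic [DecidableEq α] {β : Type*} [Fintype β] [DecidableEq β]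
    {A : Matrix α α ℝ} {B : Matrix β β ℝ} (hA : A ∈ colStochastic ℝ α)
    (hB : B ∈ colStochastic ℝ β) :
    A ⊗ₖ B ∈ colStochastic ℝ (α × β) := by
  refine mem_colStochastic_iff_sum.2 ⟨fun i j => mul_nonneg (nonneg_of_mem_colStochastic hA)
    (nonneg_of_mem_colStochastic hB), fun ⟨j₁, j₂⟩ => ?_⟩
  simp only [Fintype.sum_prod_type, kronecker_apply, ← Finset.mul_sum,
    sum_col_of_mem_colStochastic hB, mul_one, sum_col_of_mem_colStochastic hA]

lemma ConcaveOn.sum_mul_le_sum_mulVec_mul_div [DecidableEq α] {g : ℝ → ℝ} {D : Set ℝ}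
    (hg : ConcaveOn ℝ D g) {K : Matrix α α ℝ} (hK : K ∈ colStochastic ℝ α) {w s : α → ℝ}
    (hw : ∀ y, 0 ≤ w y) (hs : ∀ y, s y ∈ D) :
    ∑ y, w y * g (s y) ≤ ∑ x, (K *ᵥ w) x * g ((K *ᵥ (w * s)) x / (K *ᵥ w) x) := by
  calc ∑ y, w y * g (s y) = ∑ x, ∑ y, K x y * w y * g (s y) := by
        rw [Finset.sum_comm]
        refine Finset.sum_congr rfl fun y _ => ?_
        rw [← Finset.sum_mul, ← Finset.sum_mul, sum_col_of_mem_colStochastic hK, one_mul]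
    _ ≤ ∑ x, (K *ᵥ w) x * g ((K *ᵥ (w * s)) x / (K *ᵥ w) x) := by
        refine Finset.sum_le_sum fun x _ => ?_
        simp only [mulVec, dotProduct, Pi.mul_apply, ← mul_assoc]
        exact hg.sum_mul_le_sum_mul_map_div
          (fun y _ => mul_nonneg (nonneg_of_mem_colStochastic hK) (hw y)) (fun y _ => hs y)

/-- The binary symmetric channel with crossover probability `ε`. -/
noncomputable def bsc (ε : ℝ) : Matrix Bool Bool ℝ :=
  Matrix.of fun b c => if b = c then 1 - ε else ε

lemma bsc_mem_colStochastic {ε : ℝ} (hε0 : 0 ≤ ε) (hε1 : ε ≤ 1) :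
    bsc ε ∈ colStochastic ℝ Bool := by
  refine mem_colStochastic_iff_sum.2 ⟨fun b c => ?_, fun c => ?_⟩
  · simp only [bsc, of_apply]
    split_ifs <;> linarith
  · cases c <;> simp [bsc]

lemma boolMarginal_kronecker_bsc_mulVec (ε : ℝ) (K : Matrix α α ℝ) (P : Bool × α → ℝ) :
    boolMarginal ((bsc ε ⊗ₖ K) *ᵥ P) = K *ᵥ boolMarginal P := by
  ext x
  simp only [boolMarginal, mulVec, dotProduct, kronecker_apply, bsc, of_apply,
    Fintype.sum_prod_type, Fintype.sum_bool, ← Finset.sum_add_distrib]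
  refine Finset.sum_congr rfl fun y _ => ?_
  simp only [↓reduceIte, Bool.true_eq_false, Bool.false_eq_true]
  ring

lemma kronecker_bsc_mulVec_true (ε : ℝ) (K : Matrix α α ℝ) (P : Bool × α → ℝ) (x : α) :
    ((bsc ε ⊗ₖ K) *ᵥ P) (true, x) =
      (K *ᵥ fun y => (1 - ε) * P (true, y) + ε * P (false, y)) x := by
  simp only [mulVec, dotProduct, kronecker_apply, bsc, of_apply,
    Fintype.sum_prod_type, Fintype.sum_bool, ← Finset.sum_add_distrib]
  refine Finset.sum_congr rfl fun y _ => ?_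
  simp only [↓reduceIte, Bool.true_eq_false]
  ring

/-- One step of the Wyner–Ziv induction: a bit sent through `bsc ε`, jointly with side
information sent through `K`. -/
theorem entropy_mulVec_add_gerber_le [DecidableEq α] {ε : ℝ} (hε0 : 0 ≤ ε) (hε1 : ε ≤ 1 / 2)
    {K : Matrix α α ℝ} (hK : K ∈ colStochastic ℝ α) {P : Bool × α → ℝ} (hP0 : ∀ z, 0 ≤ P z)
    (hP1 : ∑ z, P z = 1) :
    entropy (K *ᵥ boolMarginal P) + gerber ε (condEntropyFst P) ≤
      entropy ((bsc ε ⊗ₖ K) *ᵥ P) := by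
  set w := boolMarginal P
  set q : α → ℝ := fun y => P (true, y) / w y
  have hw0 : ∀ y, 0 ≤ w y := boolMarginal_nonneg hP0
  have hq : ∀ y, q y ∈ Icc (0 : ℝ) 1 := div_boolMarginal_mem_Icc hP0
  have hws : (w * fun y => (1 - 2 * ε) * q y + ε) =
      fun y => (1 - ε) * P (true, y) + ε * P (false, y) := by
    ext y
    rcases (hw0 y).eq_or_lt with h | h
    · obtain ⟨h1, h2⟩ := (add_eq_zero_iff_of_nonneg (hP0 _) (hP0 _)).1 h.symm
      simp [← h, h1, h2]
    · simp only [Pi.mul_apply, q]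
      field_simp
      simp only [w, boolMarginal]
      ring
  have hQ0 := nonneg_mulVec_of_mem_colStochastic
    (kronecker_mem_colStochastic (bsc_mem_colStochastic hε0 (by linarith)) hK) hP0
  have hmix : ∑ y, w y * H2 ((1 - 2 * ε) * q y + ε) ≤ condEntropyFst ((bsc ε ⊗ₖ K) *ᵥ P) := by
    have h := concaveOn_H2.sum_mul_le_sum_mulVec_mul_div hK hw0
      (s := fun y => (1 - 2 * ε) * q y + ε) fun y => by
        obtain ⟨h0, h1⟩ := hq y
        constructor <;> nlinarith
    rwa [hws, ← funext (kronecker_bsc_mulVec_true ε K P),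
      ← boolMarginal_kronecker_bsc_mulVec ε K P] at h
  have hjensen : gerber ε (condEntropyFst P) ≤ ∑ y, w y * H2 ((1 - 2 * ε) * q y + ε) := by
    have h := (convexOn_gerber hε0 hε1).map_sum_le (t := Finset.univ) (w := w)
      (p := fun y => H2 (q y)) (fun y _ => hw0 y) (by rw [sum_boolMarginal, hP1])
      (fun y _ => ⟨H2_nonneg (hq y), H2_le_one _⟩)
    simp only [smul_eq_mul, gerber_H2 ε (hq _)] at h
    exact h
  rw [entropy_eq_entropy_boolMarginal_add hQ0, boolMarginal_kronecker_bsc_mulVec]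
  linarith

end Channel

section Cube

open Matrix
open scoped Kronecker

noncomputable def noiseMatrix (ε : ℝ) (n : ℕ) : Matrix (Cube n) (Cube n) ℝ :=
  Matrix.of fun x y => ∏ i, bsc ε (x i) (y i)

lemma noiseOp_eq_mulVec {n : ℕ} (ε : ℝ) (f : Cube n → ℝ) : noiseOp ε f = noiseMatrix ε n *ᵥ f := by
  ext x
  refine Finset.sum_congr rfl fun y _ => ?_
  congr 1
  have hcard := Finset.card_filter_add_card_filter_not (s := Finset.univ) (fun i => x i = y i)
  simp only [Finset.card_univ, Fintype.card_fin] at hcard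
  have hd : hammingDist y x = (Finset.univ.filter fun i => ¬x i = y i).card := by
    simp [hammingDist, eq_comm]
  have hsub : n - hammingDist y x = (Finset.univ.filter fun i => x i = y i).card := by omega
  rw [hsub, hd]
  simp only [noiseMatrix, bsc, of_apply, Finset.prod_ite, Finset.prod_const]
  ring

lemma noiseMatrix_mem_colStochastic {ε : ℝ} (hε0 : 0 ≤ ε) (hε1 : ε ≤ 1) (n : ℕ) :
    noiseMatrix ε n ∈ colStochastic ℝ (Cube n) := by
  have hbsc := bsc_mem_colStochastic hε0 hε1
  refine mem_colStochastic_iff_sum.2 ⟨fun x y => ?_, fun y => ?_⟩ <;>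
    simp only [noiseMatrix, of_apply]
  · exact Finset.prod_nonneg fun i _ => nonneg_of_mem_colStochastic hbsc
  rw [← Fintype.prod_sum (fun i b => bsc ε b (y i))]
  simp only [sum_col_of_mem_colStochastic hbsc, Finset.prod_const_one]

lemma submatrix_noiseMatrix_succ (ε : ℝ) (n : ℕ) :
    (noiseMatrix ε (n + 1)).submatrix (Fin.consEquiv fun _ => Bool) (Fin.consEquiv fun _ => Bool) =
      bsc ε ⊗ₖ noiseMatrix ε n := by
  ext ⟨b, x⟩ ⟨c, y⟩
  simp [noiseMatrix, Fin.prod_univ_succ, Fin.consEquiv]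

lemma logb_card_cube (n : ℕ) : logb 2 (Fintype.card (Cube n)) = n := by
  simp [logb_pow]

theorem natCast_mul_gerber_le_entropy_noiseMatrix_mulVec {ε : ℝ} (hε0 : 0 ≤ ε) (hε1 : ε ≤ 1 / 2)
    {n : ℕ} {p : Cube n → ℝ} (hp0 : ∀ x, 0 ≤ p x) (hp1 : ∑ x, p x = 1) :
    n * gerber ε (entropy p / n) ≤ entropy (noiseMatrix ε n *ᵥ p) := by
  have hM := noiseMatrix_mem_colStochastic hε0 (by linarith : ε ≤ 1)
  induction n with
  | zero =>
    simpa using entropy_nonneg (nonneg_mulVec_of_mem_colStochastic (hM 0) hp0)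
      (by rw [sum_mulVec_of_mem_colStochastic (hM 0), hp1])
  | succ n ih =>
    set e := Fin.consEquiv fun _ : Fin (n + 1) => Bool
    have hP0 : ∀ z, 0 ≤ (p ∘ e) z := fun z => hp0 _
    have hP1 : ∑ z, (p ∘ e) z = 1 := by rw [← hp1]; exact Equiv.sum_comp e p
    have hw0 := boolMarginal_nonneg hP0
    have hw1 : ∑ y, boolMarginal (p ∘ e) y = 1 := by rw [sum_boolMarginal, hP1]
    have hchain : entropy p = condEntropyFst (p ∘ e) + entropy (boolMarginal (p ∘ e)) := by
      rw [← entropy_comp_equiv e, entropy_eq_entropy_boolMarginal_add hP0, add_comm]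
    have hnoise : entropy (noiseMatrix ε (n + 1) *ᵥ p) =
        entropy ((bsc ε ⊗ₖ noiseMatrix ε n) *ᵥ (p ∘ e)) := by
      rw [← submatrix_noiseMatrix_succ, submatrix_mulVec_equiv, entropy_comp_equiv,
        Function.comp_assoc, Equiv.self_comp_symm, Function.comp_id]
    have hconv := (convexOn_gerber hε0 hε1).natCast_add_one_mul_map_div_le
      (condEntropyFst_mem_Icc hP0 hP1)
      ⟨entropy_nonneg hw0 hw1, (entropy_le_logb_card hw0 hw1).trans_eq (logb_card_cube n)⟩
    have hstep := entropy_mulVec_add_gerber_le hε0 hε1 (hM n) hP0 hP1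
    have hIH := ih hw0 hw1
    rw [hchain, hnoise]
    push_cast
    linarith

lemma Ent_eq_EX_mul_sub_entropy {n : ℕ} {f : Cube n → ℝ} (hS : 0 < ∑ x, f x) :
    Ent f = EX f * (n - entropy fun x => f x / ∑ y, f y) := by
  have hlog := (log_pos one_lt_two).ne'
  simp only [Ent, EX, entropy_eq_sum_negMulLog_div, div_eq_mul_inv (f _), negMulLog_mul,
    Finset.sum_add_distrib, ← Finset.sum_mul, mul_logb_two_eq_neg_negMulLog_div, neg_div,
    Finset.sum_neg_distrib, ← Finset.sum_div, ← Finset.mul_sum]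
  generalize ∑ i, negMulLog (f i) = A
  simp only [negMulLog, log_div hS.ne' (by positivity : (2 : ℝ) ^ n ≠ 0), log_pow, log_inv]
  field_simp
  ring

lemma natCast_mul_mul_phi (n : ℕ) {E : ℝ} (hE : E ≠ 0) (H ε : ℝ) :
    n * E * phi (E * (n - H) / (n * E)) ε = E * (n - n * gerber ε (H / n)) := by
  rcases eq_or_ne (n : ℝ) 0 with hn | hn
  · simp [hn]
  · rw [phi, show 1 - E * (n - H) / (n * E) = H / n by field_simp; ring, gerber]
    ring

lemma Ent_noiseOp_eq {ε : ℝ} (hε0 : 0 ≤ ε) (hε1 : ε ≤ 1) {n : ℕ} {f : Cube n → ℝ}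
    (hS : 0 < ∑ x, f x) :
    Ent (noiseOp ε f) = EX f * (n - entropy (noiseMatrix ε n *ᵥ fun x => f x / ∑ y, f y)) := by
  have hsum : ∑ x, noiseOp ε f x = ∑ x, f x := by
    rw [noiseOp_eq_mulVec,
      sum_mulVec_of_mem_colStochastic (noiseMatrix_mem_colStochastic hε0 hε1 n)]
  have hnormalize : (fun x => noiseOp ε f x / ∑ y, noiseOp ε f y) =
      noiseMatrix ε n *ᵥ fun x => f x / ∑ y, f y := by
    ext x
    rw [hsum, noiseOp_eq_mulVec]
    simp only [mulVec, dotProduct, Finset.sum_div, mul_div_assoc]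
  rw [Ent_eq_EX_mul_sub_entropy (hsum ▸ hS), hnormalize, EX, EX, hsum]

end Cube

/-- Mrs. Gerber's lemma:
`Ent(T_ε f) ≤ n (E f) φ(Ent(f)/(n E f), ε)` for nonnegative `f` with `E f > 0`. -/
theorem stmt3 {n : ℕ} (ε : ℝ) (hε0 : 0 ≤ ε) (hε1 : ε ≤ 1 / 2)
    (f : Cube n → ℝ) (hf : ∀ x, 0 ≤ f x) (hEf : 0 < EX f) :
    Ent (noiseOp ε f) ≤ (n : ℝ) * EX f * phi (Ent f / ((n : ℝ) * EX f)) ε := by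
  have hS : 0 < ∑ x, f x := by
    have := mul_pos hEf (by positivity : (0 : ℝ) < 2 ^ n)
    rwa [EX, div_mul_cancel₀ _ (by positivity)] at this
  have hmain := natCast_mul_gerber_le_entropy_noiseMatrix_mulVec hε0 hε1
    (p := fun x => f x / ∑ y, f y) (fun x => div_nonneg (hf x) hS.le)
    (by rw [← Finset.sum_div, div_self hS.ne'])
  rw [Ent_noiseOp_eq hε0 (by linarith) hS, Ent_eq_EX_mul_sub_entropy hS,
    natCast_mul_mul_phi n hEf.ne']
  exact mul_le_mul_of_nonneg_left (by linarith) hEf.le
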